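/- Let ν be a coalitional game on n players (n ≥ 1). There exists an imputation η whose nonincreasingly sorted vector of deficits (ν(S) − η(S))_{S ⊆ I} is lexicographically less than or equal to the nonincreasingly sorted deficit vector of every imputation; i.e. the nucleolus is well-defined. -/

import Mathlib

/-- The deficits `ν S - p(S)` of all `2ⁿ` coalitions, sorted in nonincreasing order. -/
noncomputable def sortedDeficitVector (n : ℕ) (ν : Finset (Fin n) → ℝ)
    (p : Fin n → ℝ) : List ℝ :=
  Multiset.sort
    ((Finset.univ.val : Multiset (Finset (Fin n))).map (fun S => ν S - ∑ i ∈ S, p i)) (· ≥ ·)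

/-- `l₁` is lexicographically less than or equal to `l₂`. -/
def LexLE (l₁ l₂ : List ℝ) : Prop := l₁ = l₂ ∨ List.Lex (· < ·) l₁ l₂

/-!
The `j`-th largest deficit is the maximum, over families of `j + 1` coalitions, of the smallest
deficit in the family; hence it depends continuously on the payoff vector. Minimizing the largest
deficit over the compact set of imputations, then the second largest over the set of minimizers,
and so on, produces a decreasing chain of nonempty compact sets, and any point of the last one is
lexicographically minimal.
-/

open Finset

noncomputable def sortedValues {α : Type*} [Fintype α] (f : α → ℝ) : List ℝ :=
  Multiset.sort (univ.val.map f) (· ≥ ·)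

section SortedValues

variable {α : Type*} [Fintype α]

lemma length_sortedValues (f : α → ℝ) : (sortedValues f).length = Fintype.card α := by
  simp [sortedValues, Multiset.length_sort]

lemma card_filter_univ_comp {β : Type*} (g : α → β) (P : β → Prop) [DecidablePred P] :
    #{x | P (g x)} = (univ.val.map g).countP P :=
  (Multiset.countP_map g univ.val P).symm

lemma le_getD_sortedValues_iff (f : α → ℝ) {j : ℕ} (hj : j < Fintype.card α) (a : ℝ) :
    a ≤ (sortedValues f).getD j 0 ↔ j < #{x | a ≤ f x} := by
  set l := sortedValues f
  have hjl : j < l.length := (length_sortedValues f).symm ▸ hj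
  have hanti : Antitone l.get := (Multiset.pairwise_sort _ _).sortedGE.antitone_get
  have hcount : #{i | a ≤ l.get i} = #{x | a ≤ f x} := by
    rw [card_filter_univ_comp, card_filter_univ_comp, Fin.univ_val_map, List.ofFn_get]
    simp only [l, sortedValues, Multiset.sort_eq]
  rw [List.getD_eq_getElem _ _ hjl, ← hcount]
  exact (Tuple.lt_card_ge_iff_apply_ge_of_antitone (j := ⟨j, hjl⟩) hanti).symm

lemma nonempty_subtype_card_eq {k : ℕ} (hk : k ≤ Fintype.card α) :
    Nonempty {T : Finset α // #T = k} :=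
  let ⟨T, _, hT⟩ := exists_subset_card_eq (s := univ) (by rwa [card_univ])
  ⟨⟨T, hT⟩⟩

lemma getD_sortedValues_eq_sup'_inf' (f : α → ℝ) {j : ℕ} (hj : j < Fintype.card α) :
    (sortedValues f).getD j 0 =
      (univ : Finset {T : Finset α // #T = j + 1}).sup'
        (univ_nonempty_iff.2 (nonempty_subtype_card_eq hj))
        fun T => T.1.inf' (card_pos.1 (by simp [T.2])) f := by
  apply le_antisymm
  · obtain ⟨T, hTsub, hT⟩ := exists_subset_card_eq ((le_getD_sortedValues_iff f hj _).1 le_rfl)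
    refine le_trans ?_ (le_sup' _ (mem_univ ⟨T, hT⟩))
    exact le_inf' _ _ fun x hx => (mem_filter.1 (hTsub hx)).2
  · refine sup'_le _ _ fun T _ => (le_getD_sortedValues_iff f hj _).2 ?_
    calc j < #T.1 := by rw [T.2]; exact j.lt_succ_self
      _ ≤ _ := card_le_card fun x hx => mem_filter.2 ⟨mem_univ x, inf'_le f hx⟩

lemma Continuous.getD_sortedValues {X : Type*} [TopologicalSpace X] {f : X → α → ℝ}
    (hf : ∀ a, Continuous fun x => f x a) (j : ℕ) :
    Continuous fun x => (sortedValues (f x)).getD j 0 := by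
  by_cases hj : j < Fintype.card α
  · simp only [getD_sortedValues_eq_sup'_inf' (α := α) _ hj]
    exact Continuous.finset_sup'_apply _ fun T _ => Continuous.finset_inf'_apply _ fun a _ => hf a
  · have hzero (x : X) : (sortedValues (f x)).getD j 0 = 0 :=
      List.getD_eq_default _ _ (by rw [length_sortedValues]; omega)
    simpa only [hzero] using continuous_const

end SortedValues

lemma List.ofFn_getD_of_length_eq {β : Type*} {l : List β} {m : ℕ} (hl : l.length = m)
    (d : β) : List.ofFn (fun j : Fin m => l.getD j d) = l := by
  subst hl
  simp

lemma LexLE.cons {l₁ l₂ : List ℝ} (a : ℝ) (h : LexLE l₁ l₂) :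
    LexLE (a :: l₁) (a :: l₂) :=
  h.imp (congrArg _) List.Lex.cons

section LexMin

variable {X : Type*} [TopologicalSpace X] {K : Set X}

theorem IsCompact.exists_forall_lexLE_ofFn (hK : IsCompact K) (hne : K.Nonempty) {m : ℕ}
    {f : Fin m → X → ℝ} (hf : ∀ j, Continuous (f j)) :
    ∃ η ∈ K, ∀ x ∈ K, LexLE (List.ofFn fun j => f j η) (List.ofFn fun j => f j x) := by
  induction m generalizing K with
  | zero => exact ⟨hne.some, hne.some_mem, fun _ _ => Or.inl (by simp)⟩
  | succ m ih =>
    obtain ⟨z, hzK, hz⟩ := hK.exists_isMinOn hne (hf 0).continuousOn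
    obtain ⟨η, ⟨hηK, hηz⟩, hη⟩ := ih (K := K ∩ {x | f 0 x ≤ f 0 z})
      (hK.inter_right (isClosed_le (hf 0) continuous_const)) ⟨z, hzK, le_refl (f 0 z)⟩
      fun j => hf j.succ
    refine ⟨η, hηK, fun x hxK => ?_⟩
    simp only [List.ofFn_succ]
    have hzx : f 0 z ≤ f 0 x := hz hxK
    rcases (hηz.trans hzx).lt_or_eq with hlt | heq
    · exact Or.inr (List.Lex.rel hlt)
    · rw [heq]
      exact (hη x ⟨hxK, heq.ge.trans hηz⟩).cons _

theorem IsCompact.exists_forall_lexLE_sortedValues (hK : IsCompact K) (hne : K.Nonempty)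
    {α : Type*} [Fintype α] {f : X → α → ℝ} (hf : ∀ a, Continuous fun x => f x a) :
    ∃ η ∈ K, ∀ x ∈ K, LexLE (sortedValues (f η)) (sortedValues (f x)) := by
  obtain ⟨η, hηK, hη⟩ := hK.exists_forall_lexLE_ofFn hne (m := Fintype.card α)
    fun j => Continuous.getD_sortedValues hf j
  refine ⟨η, hηK, fun x hxK => ?_⟩
  simpa only [List.ofFn_getD_of_length_eq (length_sortedValues _) 0] using hη x hxK

end LexMin

lemma isCompact_nonneg_sum_eq {ι : Type*} [Fintype ι] (c : ℝ) :
    IsCompact {p : ι → ℝ | (∀ i, 0 ≤ p i) ∧ ∑ i, p i = c} := by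
  refine (isCompact_Icc (a := 0) (b := fun _ => c)).of_isClosed_subset ?_ ?_
  · simp only [Set.ofPred_and, Set.ofPred_forall]
    exact (isClosed_iInter fun i => isClosed_le continuous_const (continuous_apply i)).inter
      (isClosed_eq (by fun_prop) continuous_const)
  · rintro p ⟨hp, rfl⟩
    exact ⟨hp, fun i => single_le_sum (fun k _ => hp k) (mem_univ i)⟩

theorem nucleolus_exists_general
    (n : ℕ) (ν : Finset (Fin n) → ℝ)
    (hne : ∃ p : Fin n → ℝ, (∀ i, 0 ≤ p i) ∧ ∑ i, p i = ν Finset.univ) :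
    ∃ η : Fin n → ℝ, (∀ i, 0 ≤ η i) ∧ (∑ i, η i = ν Finset.univ) ∧
      ∀ x : Fin n → ℝ, (∀ i, 0 ≤ x i) → (∑ i, x i = ν Finset.univ) →
        LexLE (sortedDeficitVector n ν η) (sortedDeficitVector n ν x) := by
  obtain ⟨η, ⟨hη0, hηsum⟩, hη⟩ :=
    (isCompact_nonneg_sum_eq (ν univ)).exists_forall_lexLE_sortedValues hne
      (f := fun p S => ν S - ∑ i ∈ S, p i) fun S => by fun_prop
  -- `sortedDeficitVector n ν p` unfolds to `sortedValues` of the deficits of `p`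
  exact ⟨η, hη0, hηsum, fun x hx0 hxsum => hη x ⟨hx0, hxsum⟩⟩

/-- For a coalitional game on `n ≥ 1` players (with a nonempty set of
imputations), there exists an imputation `η` whose nonincreasingly sorted deficit
vector is lexicographically ≤ that of every imputation: the nucleolus is
well-defined. -/
theorem nucleolus_exists
    (n : ℕ) (hn : 1 ≤ n) (ν : Finset (Fin n) → ℝ)
    (hne : ∃ p : Fin n → ℝ, (∀ i, 0 ≤ p i) ∧ ∑ i, p i = ν Finset.univ) :
    ∃ η : Fin n → ℝ, (∀ i, 0 ≤ η i) ∧ (∑ i, η i = ν Finset.univ) ∧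
      ∀ x : Fin n → ℝ, (∀ i, 0 ≤ x i) → (∑ i, x i = ν Finset.univ) →
        LexLE (sortedDeficitVector n ν η) (sortedDeficitVector n ν x) :=
  nucleolus_exists_general n ν hne
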